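/- Let 1 ≤ i < j ≤ n with i + j = n + 2, let c′ be the (i,j)-interchange of c, and u = ⌈n/2⌉. Then f(c′) − f(c) = (2(c_{n+2−i} − c_i)/n²)·( (n+2−2i)·Σ_{k=2}^{i−1} (k−1)(c_k − c_{n+2−k}) + (i−1)·Σ_{k=i+1}^{u} (n+2−2k)(c_k − c_{n+2−k}) ). -/

import Mathlib

open Finset

/-- Partial sums of the sequence `c` (1-indexed): `partSum c k = c 1 + ⋯ + c k`. -/
noncomputable def partSum (c : ℕ → ℝ) (k : ℕ) : ℝ := ∑ i ∈ Finset.Icc 1 k, c i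

/-- The mean `S̄` of the partial sums `s_1, …, s_n`. -/
noncomputable def meanPS (n : ℕ) (c : ℕ → ℝ) : ℝ :=
  (1 / (n : ℝ)) * ∑ k ∈ Finset.Icc 1 n, partSum c k

/-- The variance `f(c)` of the partial sums `s_1, …, s_n`. -/
noncomputable def varPS (n : ℕ) (c : ℕ → ℝ) : ℝ :=
  (1 / (n : ℝ)) * ∑ k ∈ Finset.Icc 1 n, (partSum c k - meanPS n c) ^ 2

/-- The `(i,j)`-partial mean `μ_{ij}(S) = (1/(j-i)) ∑_{k=i}^{j-1} s_k`. -/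
noncomputable def partMean (c : ℕ → ℝ) (i j : ℕ) : ℝ :=
  (1 / ((j : ℝ) - (i : ℝ))) * ∑ k ∈ Finset.Icc i (j - 1), partSum c k

/-- The `(i,j)`-interchange of `c`: swap the entries in positions `i` and `j`. -/
noncomputable def swapSeq (c : ℕ → ℝ) (i j : ℕ) : ℕ → ℝ := fun k => c (Equiv.swap i j k)

/-- `c` is an arrangement (permutation) of `a` on the index range `1..n`. -/
def IsArrangement (n : ℕ) (a c : ℕ → ℝ) : Prop :=
  ∃ σ : ℕ → ℕ, Set.BijOn σ (Set.Icc 1 n) (Set.Icc 1 n) ∧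
    ∀ k ∈ Set.Icc 1 n, c k = a (σ k)

/-- The dual sequence `c^d = (c_1, c_n, c_{n-1}, …, c_2)`. -/
noncomputable def dualSeq (n : ℕ) (c : ℕ → ℝ) : ℕ → ℝ :=
  fun k => if 2 ≤ k then c (n + 2 - k) else c k

/-!
Interchanging `c i` and `c j` (`i < j`) adds `d = c j - c i` to the partial sums
`s_i, …, s_{j-1}` and leaves the others unchanged, so `f(c') - f(c)` is `d / n²` times a linear
form in the window sum `∑_{i ≤ k < j} s_k`, the total `∑ s_k` and `d`. Expanding it as
`∑ w_l c_l` and comparing coefficients: when `i + j = n + 2` the window is symmetric about the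
middle and the weights are antisymmetric under `l ↦ n + 2 - l`, which is why only the
differences `c_k - c_{n+2-k}` appear.
-/

lemma partSum_succ (c : ℕ → ℝ) (k : ℕ) : partSum c (k + 1) = partSum c k + c (k + 1) :=
  Finset.sum_Icc_succ_top (by omega) c

lemma partSum_swapSeq (c : ℕ → ℝ) {i j : ℕ} (hi : 1 ≤ i) (hij : i < j) (k : ℕ) :
    partSum (swapSeq c i j) k = partSum c k + if k ∈ Ico i j then c j - c i else 0 := by
  induction k with
  | zero => simp [partSum]; omega
  | succ k ih =>
    rw [partSum_succ, partSum_succ, ih, swapSeq, Equiv.swap_apply_def]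
    simp only [mem_Ico]
    split_ifs <;> first | omega | (subst_vars; ring)

lemma varPS_eq_mean_sq_sub_sq_mean {n : ℕ} (hn : n ≠ 0) (c : ℕ → ℝ) :
    varPS n c = (∑ k ∈ Icc 1 n, partSum c k ^ 2) / n - ((∑ k ∈ Icc 1 n, partSum c k) / n) ^ 2 := by
  simp only [varPS, meanPS, sub_sq, sum_add_distrib, sum_sub_distrib, ← sum_mul, ← mul_sum,
    sum_const, Nat.card_Icc, add_tsub_cancel_right, nsmul_eq_mul]
  field_simp
  ring

lemma varPS_swapSeq_sub (c : ℕ → ℝ) {n i j : ℕ} (hi : 1 ≤ i) (hij : i < j) (hj : j ≤ n) :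
    varPS n (swapSeq c i j) - varPS n c =
      (c j - c i) / n ^ 2 *
        (2 * (n * ∑ k ∈ Ico i j, partSum c k - (j - i) * ∑ k ∈ Icc 1 n, partSum c k)
          + (j - i) * (n - (j - i)) * (c j - c i)) := by
  have hn : n ≠ 0 := by omega
  have hwin : Icc 1 n ∩ Ico i j = Ico i j :=
    inter_eq_right.mpr fun k hk => by simp only [mem_Icc, mem_Ico] at *; omega
  have hm : ((#(Ico i j) : ℕ) : ℝ) = j - i := by rw [Nat.card_Ico, Nat.cast_sub hij.le]
  rw [varPS_eq_mean_sq_sub_sq_mean hn, varPS_eq_mean_sq_sub_sq_mean hn]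
  simp only [partSum_swapSeq c hi hij, add_sq, sum_add_distrib, mul_ite, mul_zero, ite_pow,
    zero_pow two_ne_zero, sum_ite_mem, hwin, sum_const, nsmul_eq_mul, hm, ← mul_sum, ← sum_mul]
  field_simp
  ring

lemma sum_Ico_partSum (c : ℕ → ℝ) {a b n : ℕ} (hb : b ≤ n + 1) :
    ∑ k ∈ Ico a b, partSum c k = ∑ l ∈ Icc 1 n, ((b - max a l : ℕ) : ℝ) * c l := by
  unfold partSum
  rw [sum_comm' (t' := Icc 1 n) (s' := fun l => Ico (max a l) b)]
  · simp only [sum_const, Nat.card_Ico, nsmul_eq_mul]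
  · intro k l
    simp only [mem_Ico, mem_Icc, max_le_iff]
    omega

lemma sum_mul_sub_reflect (c g : ℕ → ℝ) {a b n : ℕ} (ha : 2 ≤ a) (hb : b ≤ n) :
    ∑ k ∈ Icc a b, g k * (c k - c (n + 2 - k)) =
      ∑ l ∈ Icc 1 n, ((if l ∈ Icc a b then g l else 0)
        - (if l ∈ Icc (n + 2 - b) (n + 2 - a) then g (n + 2 - l) else 0)) * c l := by
  simp only [mul_sub, sub_mul, sum_sub_distrib, ite_mul, zero_mul, sum_ite_mem]
  congr 1
  · rw [inter_eq_right.mpr fun k hk => by simp only [mem_Icc] at *; omega]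
  · rw [inter_eq_right.mpr fun k hk => by simp only [mem_Icc] at *; omega]
    refine sum_nbij' (n + 2 - ·) (n + 2 - ·) ?_ ?_ ?_ ?_ fun k hk => ?_
    any_goals intro k hk; simp only [mem_Icc] at *; omega
    rw [Nat.sub_sub_self (by simp only [mem_Icc] at hk; omega)]

lemma interchange_coeff_eq {n i j l : ℕ} (hi : 1 ≤ i) (hij : i < j) (hj : j ≤ n)
    (hsum : i + j = n + 2) (hl : l ∈ Icc 1 n) :
    2 * ((n : ℝ) * ((j - max i l : ℕ) : ℝ) - (j - i) * ((n + 1 - max 1 l : ℕ) : ℝ))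
      + (j - i) * (n - (j - i)) * ((if l = j then 1 else 0) - (if l = i then 1 else 0))
    = 2 * (((n : ℝ) + 2 - 2 * i) * ((if l ∈ Icc 2 (i - 1) then (l : ℝ) - 1 else 0)
          - (if l ∈ Icc (n + 2 - (i - 1)) (n + 2 - 2) then ((n + 2 - l : ℕ) : ℝ) - 1 else 0))
        + ((i : ℝ) - 1) * ((if l ∈ Icc (i + 1) ((n + 1) / 2) then (n : ℝ) + 2 - 2 * l else 0)
          - (if l ∈ Icc (n + 2 - (n + 1) / 2) (n + 2 - (i + 1)) then
              (n : ℝ) + 2 - 2 * ((n + 2 - l : ℕ) : ℝ) else 0))) := by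
  obtain ⟨hl1, hln⟩ := mem_Icc.mp hl
  have hnR : (n : ℝ) = i + j - 2 := by
    rw [eq_sub_iff_add_eq]; exact_mod_cast hsum.symm
  rw [max_eq_right hl1, Nat.cast_sub (by omega : l ≤ n + 1), Nat.cast_sub (by omega : l ≤ n + 2)]
  simp only [mem_Icc]
  rcases lt_trichotomy l i with hli | rfl | hil
  · rw [max_eq_left hli.le, Nat.cast_sub hij.le]
    obtain rfl | _ := hl1.eq_or_lt <;>
      split_ifs <;> first | (exfalso; omega) | (push_cast; rw [hnR]; ring)
  · rw [max_self, Nat.cast_sub hij.le]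
    split_ifs <;> first | (exfalso; omega) | (push_cast; rw [hnR]; ring)
  · rcases lt_trichotomy l j with hlj | rfl | hjl
    · rw [max_eq_right hil.le, Nat.cast_sub hlj.le]
      by_cases hmid : 2 * l = n + 2
      -- the middle index of an even `n` lies in neither range on the right; its weight vanishes
      · have hlR : (l : ℝ) = (i + j) / 2 := by
          rw [eq_div_iff two_ne_zero]; exact_mod_cast (by omega : l * 2 = i + j)
        split_ifs <;> first | (exfalso; omega) | (push_cast; rw [hnR, hlR]; ring)
      · split_ifs <;> first | (exfalso; omega) | (push_cast; rw [hnR]; ring)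
    · rw [max_eq_right hil.le, Nat.sub_self]
      split_ifs <;> first | (exfalso; omega) | (push_cast; rw [hnR]; ring)
    · rw [max_eq_right hil.le, Nat.sub_eq_zero_of_le hjl.le]
      split_ifs <;> first | (exfalso; omega) | (push_cast; rw [hnR]; ring)

lemma interchange_linear_form_eq (c : ℕ → ℝ) {n i j : ℕ} (hi : 1 ≤ i) (hij : i < j) (hj : j ≤ n)
    (hsum : i + j = n + 2) :
    2 * (n * ∑ k ∈ Ico i j, partSum c k - (j - i) * ∑ k ∈ Icc 1 n, partSum c k)
        + (j - i) * (n - (j - i)) * (c j - c i) =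
      2 * (((n : ℝ) + 2 - 2 * i) * ∑ k ∈ Icc 2 (i - 1), ((k : ℝ) - 1) * (c k - c (n + 2 - k))
        + ((i : ℝ) - 1) *
          ∑ k ∈ Icc (i + 1) ((n + 1) / 2), ((n : ℝ) + 2 - 2 * k) * (c k - c (n + 2 - k))) := by
  have hmem : ∀ {l}, 1 ≤ l → l ≤ n → l ∈ Icc 1 n := fun h1 h2 => mem_Icc.mpr ⟨h1, h2⟩
  have hcji : c j - c i =
      ∑ l ∈ Icc 1 n, ((if l = j then 1 else 0) - (if l = i then 1 else 0)) * c l := by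
    simp only [sub_mul, ite_mul, one_mul, zero_mul, sum_sub_distrib, sum_ite_eq',
      if_pos (hmem (by omega) hj), if_pos (hmem hi (by omega))]
  rw [← Ico_add_one_right_eq_Icc 1 n, sum_Ico_partSum c (by omega : j ≤ n + 1),
    sum_Ico_partSum c le_rfl, hcji, sum_mul_sub_reflect c _ le_rfl (by omega),
    sum_mul_sub_reflect c _ (by omega) (by omega)]
  simp only [mul_sum, ← sum_sub_distrib, ← sum_add_distrib]
  refine sum_congr rfl fun l hl => ?_
  linear_combination c l * interchange_coeff_eq hi hij hj hsum hl

theorem varPS_swap_diff_sum_eq_n_add_two_general (n : ℕ) (c : ℕ → ℝ) (i j : ℕ)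
    (hi : 1 ≤ i) (hij : i < j) (hj : j ≤ n) (hsum : i + j = n + 2) :
    varPS n (swapSeq c i j) - varPS n c =
      2 * (c (n + 2 - i) - c i) / (n : ℝ) ^ 2 *
        (((n : ℝ) + 2 - 2 * (i : ℝ)) *
            ∑ k ∈ Finset.Icc 2 (i - 1), ((k : ℝ) - 1) * (c k - c (n + 2 - k))
          + ((i : ℝ) - 1) *
            ∑ k ∈ Finset.Icc (i + 1) ((n + 1) / 2),
              ((n : ℝ) + 2 - 2 * (k : ℝ)) * (c k - c (n + 2 - k))) := by
  rw [show n + 2 - i = j by omega, varPS_swapSeq_sub c hi hij hj,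
    interchange_linear_form_eq c hi hij hj hsum]
  ring

/-- explicit value of the change of the objective under an
(i,j)-interchange with `i + j = n + 2`. -/
theorem varPS_swap_diff_sum_eq_n_add_two (n : ℕ) (hn : 2 ≤ n) (c : ℕ → ℝ) (i j : ℕ)
    (hi : 1 ≤ i) (hij : i < j) (hj : j ≤ n) (hsum : i + j = n + 2) :
    varPS n (swapSeq c i j) - varPS n c =
      2 * (c (n + 2 - i) - c i) / (n : ℝ) ^ 2 *
        (((n : ℝ) + 2 - 2 * (i : ℝ)) *
            ∑ k ∈ Finset.Icc 2 (i - 1), ((k : ℝ) - 1) * (c k - c (n + 2 - k))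
          + ((i : ℝ) - 1) *
            ∑ k ∈ Finset.Icc (i + 1) ((n + 1) / 2),
              ((n : ℝ) + 2 - 2 * (k : ℝ)) * (c k - c (n + 2 - k))) :=
  varPS_swap_diff_sum_eq_n_add_two_general n c i j hi hij hj hsum
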